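/- Let α ∈ [2π/3, 3π/4). Define x : (Fin 3 → Fin 3) → ℝ so that x(L) depends only on the triple (N0,N1,N2) counting how many coordinates of L equal 0, 1, 2 respectively, with values: 3·sin α for (3,0,0) and (0,0,3); sin 3α for (2,0,1) and (1,0,2); −sin 2α for (2,1,0), (1,1,1) and (0,1,2); sin α for (1,2,0) and (0,2,1); and 0 for (0,3,0). Then x has all entries nonnegative, x ≠ 0, and A_α^{⊗3} x = 0. -/

import Mathlib

/-!
Both `x` and the rows of `A_α^{⊗3}` are invariant under permuting the three tensor factors, so
`A_α^{⊗3} x = 0` only has to be checked at the four sorted row indices `J`. Writing `z = e^{iα}`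
and `sin nα = (z^{-n} - z^n) i / 2`, each of these four entries is a Laurent polynomial in `z`
that vanishes identically. Nonnegativity comes from `sin α ≥ 0`, `sin 2α ≤ 0`, `sin 3α ≥ 0`
on `[2π/3, π]`.
-/

open Complex Real Finset

/-- The matrix `A_α` with rows `(1, e^{iα}, 0)` and `(0, 1, e^{iα})`. -/
noncomputable def Amat (α : ℝ) : Matrix (Fin 2) (Fin 3) ℂ :=
  !![1, Complex.exp (α * Complex.I), 0;
     0, 1, Complex.exp (α * Complex.I)]

/-- The number of coordinates of `L` equal to `i`. -/
def cnt {N : ℕ} (L : Fin N → Fin 3) (i : Fin 3) : ℕ :=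
  (Finset.univ.filter fun p => L p = i).card

/-- The values of the explicit solution for `N = 3`, as a function of the
counts `(N0, N1, N2)` of digits `0`, `1`, `2`. -/
noncomputable def wval (α : ℝ) : ℕ → ℕ → ℕ → ℝ
  | 3, 0, 0 => 3 * Real.sin α
  | 0, 0, 3 => 3 * Real.sin α
  | 2, 0, 1 => Real.sin (3 * α)
  | 1, 0, 2 => Real.sin (3 * α)
  | 2, 1, 0 => -Real.sin (2 * α)
  | 1, 1, 1 => -Real.sin (2 * α)
  | 0, 1, 2 => -Real.sin (2 * α)
  | 1, 2, 0 => Real.sin α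
  | 0, 2, 1 => Real.sin α
  | _, _, _ => 0

theorem Fintype.sum_fin_succ_pi {n : ℕ} {γ M : Type*} [Fintype γ] [AddCommMonoid M]
    (f : (Fin (n + 1) → γ) → M) : ∑ L, f L = ∑ a, ∑ L, f (Matrix.vecCons a L) := by
  rw [← (Fin.consEquiv fun _ => γ).sum_comp, Fintype.sum_prod_type]
  rfl

theorem sum_mul_prod_comp_perm {ι κ m R : Type*} [Fintype ι] [DecidableEq ι] [Fintype κ]
    [CommSemiring R] (A : Matrix m κ R) (f : (ι → κ) → R)
    (hf : ∀ L (σ : Equiv.Perm ι), f (L ∘ σ) = f L) (J : ι → m) (σ : Equiv.Perm ι) :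
    ∑ L, f L * ∏ p, A (J (σ p)) (L p) = ∑ L, f L * ∏ p, A (J p) (L p) := by
  refine (Fintype.sum_equiv (σ.symm.arrowCongr (Equiv.refl κ)) _ _ fun L => ?_).symm
  change _ = f (L ∘ σ) * ∏ p, A (J (σ p)) (L (σ p))
  rw [hf, Equiv.prod_comp σ fun p => A (J p) (L p)]

lemma cnt_vecCons {N : ℕ} (a : Fin 3) (L : Fin N → Fin 3) (i : Fin 3) :
    cnt (Matrix.vecCons a L) i = (if a = i then 1 else 0) + cnt L i :=
  Fin.card_filter_univ_succ' _

lemma cnt_fin_zero (L : Fin 0 → Fin 3) (i : Fin 3) : cnt L i = 0 := rfl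

lemma cnt_comp_perm {N : ℕ} (L : Fin N → Fin 3) (σ : Equiv.Perm (Fin N)) (i : Fin 3) :
    cnt (L ∘ σ) i = cnt L i :=
  Finset.card_equiv σ (by simp)

lemma monotone_fin_three_fin_two {J : Fin 3 → Fin 2} (hJ : Monotone J) :
    J = ![0, 0, 0] ∨ J = ![0, 0, 1] ∨ J = ![0, 1, 1] ∨ J = ![1, 1, 1] := by
  have h01 := hJ (show (0 : Fin 3) ≤ 1 by decide)
  have h12 := hJ (show (1 : Fin 3) ≤ 2 by decide)
  revert J
  decide

lemma Complex.sin_nat_mul_eq_exp_pow (x : ℂ) (n : ℕ) :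
    sin (n * x) = ((exp (x * I) ^ n)⁻¹ - exp (x * I) ^ n) * I / 2 := by
  rw [Complex.sin, ← Complex.exp_nat_mul, ← Complex.exp_neg]
  ring_nf

lemma Real.sin_two_mul_nonpos {α : ℝ} (h₀ : π / 2 ≤ α) (h₁ : α ≤ π) : Real.sin (2 * α) ≤ 0 := by
  rw [← Real.sin_sub_two_pi]
  exact Real.sin_nonpos_of_nonpos_of_neg_pi_le (by linarith) (by linarith)

lemma Real.sin_three_mul_nonneg {α : ℝ} (h₀ : 2 * π / 3 ≤ α) (h₁ : α ≤ π) :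
    0 ≤ Real.sin (3 * α) := by
  rw [← Real.sin_sub_two_pi]
  exact Real.sin_nonneg_of_nonneg_of_le_pi (by linarith) (by linarith)

lemma wval_nonneg {α : ℝ} (h₁ : 0 ≤ Real.sin α) (h₂ : Real.sin (2 * α) ≤ 0)
    (h₃ : 0 ≤ Real.sin (3 * α)) (a b c : ℕ) : 0 ≤ wval α a b c := by
  unfold wval
  split <;> linarith

lemma wval_tensor_apply_of_monotone (α : ℝ) {J : Fin 3 → Fin 2} (hJ : Monotone J) :
    ∑ L : Fin 3 → Fin 3, (wval α (cnt L 0) (cnt L 1) (cnt L 2) : ℂ) *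
      ∏ p, Amat α (J p) (L p) = 0 := by
  have hz : cexp (α * I) ≠ 0 := Complex.exp_ne_zero _
  have h₁ := Complex.sin_nat_mul_eq_exp_pow α 1
  have h₂ := Complex.sin_nat_mul_eq_exp_pow α 2
  have h₃ := Complex.sin_nat_mul_eq_exp_pow α 3
  push_cast at h₁ h₂ h₃
  rw [one_mul, pow_one] at h₁
  rcases monotone_fin_three_fin_two hJ with rfl | rfl | rfl | rfl <;>
  · simp only [Fintype.sum_fin_succ_pi, Fintype.sum_unique, Fin.sum_univ_three,
      Fin.prod_univ_three]
    simp only [cnt_vecCons, cnt_fin_zero, ↓reduceIte, Fin.isValue, Fin.reduceEq, zero_ne_one,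
      one_ne_zero, Nat.reduceAdd, add_zero, zero_add, wval, Amat, Matrix.of_apply,
      Matrix.cons_val', Matrix.cons_val, Matrix.cons_val_zero, Matrix.cons_val_one,
      Matrix.cons_val_fin_one, mul_zero, zero_mul, mul_one, one_mul, neg_mul, ofReal_zero,
      ofReal_neg, ofReal_mul, ofReal_ofNat, ofReal_sin, h₁, h₂, h₃]
    field_simp
    ring

/-- For `α ∈ [2π/3, 3π/4)` the vector `x(L) = wval α (cnt L 0) (cnt L 1) (cnt L 2)`
is a nontrivial nonnegative solution of `A_α^{⊗3} x = 0`. -/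
theorem explicit_nns_N3 (α : ℝ) (hα : α ∈ Set.Ico (2 * π / 3) (3 * π / 4)) :
    (∀ L : Fin 3 → Fin 3, 0 ≤ wval α (cnt L 0) (cnt L 1) (cnt L 2)) ∧
    (fun L : Fin 3 → Fin 3 => wval α (cnt L 0) (cnt L 1) (cnt L 2)) ≠ 0 ∧
    (∀ J : Fin 3 → Fin 2,
      ∑ L : Fin 3 → Fin 3,
        (wval α (cnt L 0) (cnt L 1) (cnt L 2) : ℂ) *
          ∏ p : Fin 3, Amat α (J p) (L p) = 0) := by
  obtain ⟨hlo, hhi⟩ := hα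
  have hπ := Real.pi_pos
  have hsin₁ : 0 < Real.sin α := Real.sin_pos_of_pos_of_lt_pi (by linarith) (by linarith)
  have hsin₂ := Real.sin_two_mul_nonpos (α := α) (by linarith) (by linarith)
  have hsin₃ := Real.sin_three_mul_nonneg hlo (by linarith)
  refine ⟨fun L => wval_nonneg hsin₁.le hsin₂ hsin₃ _ _ _, fun h => ?_, fun J => ?_⟩
  · have h₀ := congrFun h ![0, 0, 0]
    simp only [cnt_vecCons, cnt_fin_zero, Fin.isValue, ↓reduceIte, Fin.reduceEq, Nat.reduceAdd,
      add_zero, wval, Pi.zero_apply] at h₀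
    linarith
  · have hsymm (L : Fin 3 → Fin 3) (σ : Equiv.Perm (Fin 3)) :
        (wval α (cnt (L ∘ σ) 0) (cnt (L ∘ σ) 1) (cnt (L ∘ σ) 2) : ℂ) =
          wval α (cnt L 0) (cnt L 1) (cnt L 2) := by
      simp only [cnt_comp_perm]
    exact (sum_mul_prod_comp_perm (Amat α) _ hsymm J (Tuple.sort J)).symm.trans
      (wval_tensor_apply_of_monotone α (Tuple.monotone_sort J))
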